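/- arXiv:0904.1481 — 5 statements merged into one kernel-verified Lean document; each statement's English description precedes it below -/
import Mathlib

section
/- Define, for a composition m=(m₁,…,m_n) of L, the signed sum g(m) = ∑ (-1)^{n-l} · L!/(i₁!⋯i_l!), where the sum runs over all compositions (i₁,…,i_l) obtained from m by successively merging adjacent parts. Then g satisfies the recursion g(m₁,m₂,…,m_n) = C(L,m₁)·g'(m₂,…,m_n) - g(m₁+m₂,m₃,…,m_n), where g' is the analogous function for compositions of L−m₁ and C(L,m₁) is the binomial coefficient. -/
/-!
A coarsening of `(m₁, m₂, …, m_n)` either keeps `m₁` as its own first part, and is then `m₁`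
prepended to a coarsening of `(m₂, …, m_n)`, or merges `m₁` into the next part, and is then a
coarsening of `(m₁ + m₂, m₃, …, m_n)`. In the first case the multinomial coefficient factors as
`C(L, m₁)` times a multinomial coefficient of `L - m₁`; in the second the reference length `n`
exceeds that of `(m₁ + m₂, m₃, …, m_n)` by one, which flips every sign.
-/

/-- All coarsenings of a composition: the compositions obtained from it by
successively merging adjacent parts. -/
def coarsenings : List ℕ → List (List ℕ)
  | [] => [[]]
  | [a] => [[a]]
  | a :: b :: t => ((coarsenings (b :: t)).map (a :: ·)) ++ coarsenings ((a + b) :: t)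
termination_by m => m.length
decreasing_by all_goals simp

/-- The multinomial coefficient `L! / (i₁! ⋯ i_l!)`. -/
def mult (L : ℕ) (i : List ℕ) : ℤ :=
  ((Nat.factorial L / (i.map Nat.factorial).prod : ℕ) : ℤ)

/-- The signed coarsening sum
`g(m) = ∑ (-1)^(n-l) · L!/(i₁!⋯i_l!)` over all coarsenings `(i₁,…,i_l)` of `m`. -/
def g (L : ℕ) (m : List ℕ) : ℤ :=
  ((coarsenings m).map (fun i => (-1 : ℤ) ^ (m.length - i.length) * mult L i)).sum

theorem sum_of_mem_coarsenings {m i : List ℕ} (hi : i ∈ coarsenings m) : i.sum = m.sum := by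
  induction m using coarsenings.induct generalizing i with
  | case1 | case2 => simp_all [coarsenings]
  | case3 a b t ih₁ ih₂ =>
    simp only [coarsenings, List.mem_append, List.mem_map] at hi
    rcases hi with ⟨j, hj, rfl⟩ | hi
    · simp [ih₁ hj]
    · simp [ih₂ hi, add_assoc]

theorem length_le_of_mem_coarsenings {m i : List ℕ} (hi : i ∈ coarsenings m) :
    i.length ≤ m.length := by
  induction m using coarsenings.induct generalizing i with
  | case1 | case2 => simp_all [coarsenings]
  | case3 a b t ih₁ ih₂ =>
    simp only [coarsenings, List.mem_append, List.mem_map] at hi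
    rcases hi with ⟨j, hj, rfl⟩ | hi
    · simpa using ih₁ hj
    · simpa using (ih₂ hi).trans (Nat.le_succ _)

theorem prod_map_factorial_dvd_factorial_sum (i : List ℕ) :
    (i.map Nat.factorial).prod ∣ i.sum.factorial := by
  induction i with
  | nil => simp
  | cons a t ih =>
    simpa using
      (mul_dvd_mul_left _ ih).trans (Nat.factorial_mul_factorial_dvd_factorial_add a t.sum)

theorem mult_cons {L a : ℕ} {i : List ℕ} (hsum : a + i.sum = L) :
    mult L (a :: i) = (L.choose a : ℤ) * mult (L - a) i := by
  have hi : i.sum = L - a := by omega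
  have hdvd := hi ▸ prod_map_factorial_dvd_factorial_sum i
  have hfac : L.factorial / a.factorial = L.choose a * (L - a).factorial := by
    rw [← Nat.choose_mul_factorial_mul_factorial (by omega : a ≤ L), mul_right_comm,
      Nat.mul_div_cancel _ a.factorial_pos]
  simp only [mult, List.map_cons, List.prod_cons, ← Nat.div_div_eq_div_mul, hfac,
    Nat.mul_div_assoc _ hdvd, Nat.cast_mul]

theorem sum_map_cons_coarsenings {L a b : ℕ} {t : List ℕ} (hsum : a + b + t.sum = L) :
    ((coarsenings (b :: t)).map fun i =>
        (-1 : ℤ) ^ ((a :: b :: t).length - (a :: i).length) * mult L (a :: i)).sum =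
      L.choose a * g (L - a) (b :: t) := by
  rw [g, ← List.sum_map_mul_left]
  refine congrArg List.sum (List.map_congr_left fun i hi => ?_)
  have hi_sum := sum_of_mem_coarsenings hi
  rw [mult_cons (by simp only [hi_sum, List.sum_cons]; omega)]
  simp only [List.length_cons, Nat.add_sub_add_right]
  ring

theorem sum_map_coarsenings_merge (L a b : ℕ) (t : List ℕ) :
    ((coarsenings ((a + b) :: t)).map fun i =>
        (-1 : ℤ) ^ ((a :: b :: t).length - i.length) * mult L i).sum =
      -g L ((a + b) :: t) := by
  rw [g, ← neg_one_mul (List.sum _), ← List.sum_map_mul_left]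
  refine congrArg List.sum (List.map_congr_left fun i hi => ?_)
  have hi_len := length_le_of_mem_coarsenings hi
  simp only [List.length_cons] at hi_len ⊢
  rw [Nat.sub_add_comm hi_len, pow_succ]
  ring

theorem g_recursion_general (L m₁ m₂ : ℕ) (rest : List ℕ)
    (hsum : m₁ + m₂ + rest.sum = L) :
    g L (m₁ :: m₂ :: rest) =
      (L.choose m₁ : ℤ) * g (L - m₁) (m₂ :: rest) - g L ((m₁ + m₂) :: rest) := by
  rw [g, coarsenings, List.map_append, List.sum_append, List.map_map, Function.comp_def,
    sum_map_cons_coarsenings hsum, sum_map_coarsenings_merge, sub_eq_add_neg]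

/-- The recursion `g(m₁,m₂,…,m_n) = C(L,m₁)·g'(m₂,…,m_n) − g(m₁+m₂,m₃,…,m_n)`,
where `g'` is the analogous signed coarsening sum for compositions of `L − m₁`. -/
theorem g_recursion (L m₁ m₂ : ℕ) (rest : List ℕ)
    (h₁ : 1 ≤ m₁) (h₂ : 1 ≤ m₂) (hrest : ∀ x ∈ rest, 1 ≤ x)
    (hsum : m₁ + m₂ + rest.sum = L) :
    g L (m₁ :: m₂ :: rest) =
      (L.choose m₁ : ℤ) * g (L - m₁) (m₂ :: rest) - g L ((m₁ + m₂) :: rest) :=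
  g_recursion_general L m₁ m₂ rest hsum
end

section
/- Let g be the signed coarsening sum on compositions defined by g(m₁,…,m_n) = ∑ (-1)^{n-l} L!/(i₁!⋯i_l!) over all coarsenings (i₁,…,i_l) of (m₁,…,m_n). Then for any composition π of L−a−1 and any a ≥ 1, g(1^{a+1},π) + g(1^{a-1},2,π) = C(L,a) · g'(1,π), where g' is the analogous function for compositions of L−a and (1^{a+1},π) denotes a+1 ones followed by the parts of π. -/
/-!
The coarsenings of a composition `(u, x, y, v)` either keep the cut between `x` and `y`, and are
then concatenations of coarsenings of `(u, x)` and `(y, v)`, whose multinomial coefficients factor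
through `C(L, a)`, or they merge `x` and `y`, and are then the coarsenings of `(u, x + y, v)`, with
one part fewer in the sign. Hence `g(u, x, y, v) = C(L, a) g(u, x) g(y, v) - g(u, x + y, v)`.
Cutting `(1^{a+1}, π)` after its `a`-th part gives the identity, since `g(1^a) = 1`: splitting off
the first block of a coarsening of `1^{n+1}` reduces `g(1^{n+1})` to
`∑_{j ≤ n} (-1)^{n-j} C(n+1, j) = 1`.
-/

open Finset

theorem sum_eq_of_mem_coarsenings (m : List ℕ) : ∀ c ∈ coarsenings m, c.sum = m.sum := by
  induction m using coarsenings.induct with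
  | case1 | case2 => simp [coarsenings]
  | case3 a b t ih₁ ih₂ =>
    intro c hc
    rw [coarsenings, List.mem_append, List.mem_map] at hc
    rcases hc with ⟨d, hd, rfl⟩ | hc
    · simp [ih₁ d hd]
    · simp only [ih₂ c hc, List.sum_cons, add_assoc]

theorem length_le_of_mem_coarsenings_s2 (m : List ℕ) : ∀ c ∈ coarsenings m, c.length ≤ m.length := by
  induction m using coarsenings.induct with
  | case1 | case2 => simp [coarsenings]
  | case3 a b t ih₁ ih₂ =>
    intro c hc
    rw [coarsenings, List.mem_append, List.mem_map] at hc
    rcases hc with ⟨d, hd, rfl⟩ | hc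
    · simpa using ih₁ d hd
    · have := ih₂ c hc
      simp only [List.length_cons] at this ⊢
      omega

section CoarseningSum

variable {M : Type*} [AddCommMonoid M]

def coarseningSum (m : List ℕ) (f : List ℕ → M) : M :=
  ((coarsenings m).map f).sum

theorem coarseningSum_singleton (a : ℕ) (f : List ℕ → M) : coarseningSum [a] f = f [a] := by
  simp [coarseningSum, coarsenings]

theorem coarseningSum_cons_cons (a b : ℕ) (t : List ℕ) (f : List ℕ → M) :
    coarseningSum (a :: b :: t) f
      = coarseningSum (b :: t) (fun c => f (a :: c)) + coarseningSum ((a + b) :: t) f := by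
  rw [coarseningSum, coarsenings, List.map_append, List.sum_append, List.map_map]
  rfl

theorem coarseningSum_congr {m : List ℕ} {f f' : List ℕ → M}
    (h : ∀ c ∈ coarsenings m, f c = f' c) : coarseningSum m f = coarseningSum m f' :=
  congrArg List.sum (List.map_congr_left h)

theorem coarseningSum_append_cons_cons (u : List ℕ) :
    ∀ (x y : ℕ) (v : List ℕ) (f : List ℕ → M),
      coarseningSum (u ++ x :: y :: v) f
        = coarseningSum (u ++ [x]) (fun c => coarseningSum (y :: v) (fun d => f (c ++ d)))
          + coarseningSum (u ++ (x + y) :: v) f := by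
  induction u using coarsenings.induct with
  | case1 =>
    intro x y v f
    simp only [List.nil_append, coarseningSum_cons_cons, coarseningSum_singleton]
    rfl
  | case2 a =>
    intro x y v f
    simp only [List.cons_append, List.nil_append, coarseningSum_cons_cons,
      coarseningSum_singleton, add_assoc]
    abel
  | case3 a b t ih₁ ih₂ =>
    intro x y v f
    simp only [List.cons_append] at ih₁ ih₂ ⊢
    rw [coarseningSum_cons_cons, coarseningSum_cons_cons, coarseningSum_cons_cons, ih₁, ih₂]
    simp only [List.cons_append]
    abel

theorem coarseningSum_cons_replicate (n : ℕ) :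
    ∀ (b : ℕ) (f : List ℕ → M), coarseningSum (b :: List.replicate n 1) f
      = ∑ j ∈ range (n + 1), coarseningSum (List.replicate j 1) (fun d => f ((b + n - j) :: d)) := by
  induction n with
  | zero => intro b f; simp [coarseningSum, coarsenings]
  | succ n ih =>
    intro b f
    rw [List.replicate_succ, coarseningSum_cons_cons, ih (b + 1), sum_range_succ _ (n + 1), add_comm]
    congr 1
    · refine sum_congr rfl fun j hj => ?_
      rw [show b + 1 + n - j = b + (n + 1) - j by omega]
    · simp [List.replicate_succ]

end CoarseningSum

section Semiring

variable {R : Type*} [NonUnitalNonAssocSemiring R]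

theorem coarseningSum_mul_left (m : List ℕ) (f : List ℕ → R) (r : R) :
    coarseningSum m (fun c => r * f c) = r * coarseningSum m f :=
  List.sum_map_mul_left _ _ _

theorem coarseningSum_mul_coarseningSum (m₁ m₂ : List ℕ) (f h : List ℕ → R) :
    coarseningSum m₁ f * coarseningSum m₂ h
      = coarseningSum m₁ (fun c => coarseningSum m₂ (fun d => f c * h d)) := by
  simp only [coarseningSum, List.sum_map_mul_left, List.sum_map_mul_right]

end Semiring

theorem g_eq_coarseningSum (L : ℕ) (m : List ℕ) :
    g L m = coarseningSum m (fun c => (-1 : ℤ) ^ (m.length - c.length) * mult L c) :=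
  rfl

theorem sum_range_neg_one_pow_sub_mul_choose_succ (n : ℕ) :
    ∑ j ∈ range (n + 1), (-1 : ℤ) ^ (n - j) * (n + 1).choose j = 1 := by
  calc ∑ j ∈ range (n + 1), (-1 : ℤ) ^ (n - j) * (n + 1).choose j
      = (-1) ^ n * ∑ j ∈ range (n + 1), ((-1 : ℤ) ^ j * (n + 1).choose j) := by
        rw [mul_sum]
        refine sum_congr rfl fun j hj => ?_
        rw [← mul_assoc, ← pow_add, show n + j = n - j + 2 * j by grind, pow_add, pow_mul,
          neg_one_sq, one_pow, mul_one]
    _ = 1 := by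
        rw [Int.alternating_sum_range_choose_eq_choose, Nat.choose_self, Nat.cast_one, mul_one,
          ← pow_add, ← two_mul, pow_mul, neg_one_sq, one_pow]

theorem List.prod_map_factorial_dvd_factorial_sum (c : List ℕ) :
    (c.map Nat.factorial).prod ∣ c.sum.factorial := by
  induction c with
  | nil => simp
  | cons x t ih =>
    rw [List.map_cons, List.prod_cons, List.sum_cons]
    exact (mul_dvd_mul_left _ ih).trans (Nat.factorial_mul_factorial_dvd_factorial_add _ _)

theorem mult_mul_prod_map_factorial (c : List ℕ) :
    mult c.sum c * ((c.map Nat.factorial).prod : ℤ) = c.sum.factorial := by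
  rw [mult, ← Nat.cast_mul, Nat.div_mul_cancel c.prod_map_factorial_dvd_factorial_sum]

theorem mult_append {a b : ℕ} {c₁ c₂ : List ℕ} (h₁ : c₁.sum = a) (h₂ : c₂.sum = b) :
    mult (a + b) (c₁ ++ c₂) = (a + b).choose a * mult a c₁ * mult b c₂ := by
  subst h₁ h₂
  have hpos (c : List ℕ) : ((c.map Nat.factorial).prod : ℤ) ≠ 0 := by
    exact_mod_cast (List.prod_pos fun _ hx => by
      obtain ⟨y, -, rfl⟩ := List.mem_map.1 hx; exact Nat.factorial_pos y).ne'
  refine mul_right_cancel₀ (hpos (c₁ ++ c₂)) ?_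
  calc mult (c₁.sum + c₂.sum) (c₁ ++ c₂) * ((c₁ ++ c₂).map Nat.factorial).prod
      = (c₁.sum + c₂.sum).factorial := by
        rw [← List.sum_append, mult_mul_prod_map_factorial]
    _ = (c₁.sum + c₂.sum).choose c₁.sum * (mult c₁.sum c₁ * (c₁.map Nat.factorial).prod)
          * (mult c₂.sum c₂ * (c₂.map Nat.factorial).prod) := by
        rw [mult_mul_prod_map_factorial, mult_mul_prod_map_factorial,
          ← Nat.add_choose_mul_factorial_mul_factorial, Nat.choose_symm_add]
        push_cast; ring
    _ = _ := by rw [List.map_append, List.prod_append]; push_cast; ring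

theorem mult_singleton (x : ℕ) : mult x [x] = 1 := by
  simp [mult, Nat.div_self (Nat.factorial_pos x)]

theorem mult_cons_s2 {x b : ℕ} {d : List ℕ} (hd : d.sum = b) :
    mult (x + b) (x :: d) = (x + b).choose b * mult b d := by
  rw [← List.singleton_append, mult_append (List.sum_singleton) hd, mult_singleton,
    Nat.choose_symm_add, mul_one]

theorem g_replicate_one (n : ℕ) : g n (List.replicate n 1) = 1 := by
  induction n using Nat.strong_induction_on with
  | _ n ih =>
    rcases n with _ | n
    · simp [g, coarsenings, mult]
    rw [g_eq_coarseningSum, List.replicate_succ, coarseningSum_cons_replicate]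
    refine (sum_congr rfl fun j hj => ?_).trans (sum_range_neg_one_pow_sub_mul_choose_succ n)
    have hjn : j ≤ n := Nat.lt_succ_iff.1 (mem_range.1 hj)
    calc _ = (-1 : ℤ) ^ (n - j) * (n + 1).choose j * g j (List.replicate j 1) := ?_
      _ = _ := by rw [ih j (by omega), mul_one]
    rw [g_eq_coarseningSum, ← coarseningSum_mul_left]
    refine coarseningSum_congr fun d hd => ?_
    have hsum : d.sum = j := by simpa using sum_eq_of_mem_coarsenings _ d hd
    have hlen : d.length ≤ j := by simpa using length_le_of_mem_coarsenings_s2 _ d hd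
    have hsplit : 1 + n - j + j = n + 1 := by omega
    rw [← hsplit, mult_cons_s2 hsum, hsplit, List.length_cons, List.length_cons, List.length_replicate,
      List.length_replicate, show n + 1 - (d.length + 1) = n - j + (j - d.length) by omega, pow_add]
    ring

theorem g_append_cons_cons {a b x y : ℕ} {u v : List ℕ} (ha : (u ++ [x]).sum = a)
    (hb : (y :: v).sum = b) :
    g (a + b) (u ++ x :: y :: v)
      = (a + b).choose a * g a (u ++ [x]) * g b (y :: v) - g (a + b) (u ++ (x + y) :: v) := by
  rw [sub_eq_add_neg, ← neg_one_mul (g (a + b) _), g_eq_coarseningSum (a + b) (u ++ (x + y) :: v),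
    ← coarseningSum_mul_left, g_eq_coarseningSum, coarseningSum_append_cons_cons]
  congr 1
  · rw [mul_assoc, g_eq_coarseningSum, g_eq_coarseningSum, coarseningSum_mul_coarseningSum,
      ← coarseningSum_mul_left]
    refine coarseningSum_congr fun c hc => ?_
    rw [← coarseningSum_mul_left]
    refine coarseningSum_congr fun d hd => ?_
    have hc₁ := length_le_of_mem_coarsenings_s2 _ c hc
    have hd₁ := length_le_of_mem_coarsenings_s2 _ d hd
    simp only [List.length_append, List.length_cons, List.length_nil] at hc₁ hd₁ ⊢
    rw [mult_append ((sum_eq_of_mem_coarsenings _ c hc).trans ha)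
      ((sum_eq_of_mem_coarsenings _ d hd).trans hb),
      show u.length + (v.length + 1 + 1) - (c.length + d.length)
        = u.length + 1 - c.length + (v.length + 1 - d.length) by omega, pow_add]
    ring
  · refine coarseningSum_congr fun c hc => ?_
    have hlen := length_le_of_mem_coarsenings_s2 _ c hc
    simp only [List.length_append, List.length_cons] at hlen ⊢
    rw [show u.length + (v.length + 1 + 1) - c.length = u.length + (v.length + 1) - c.length + 1
      by omega, pow_succ]
    ring

theorem g_pair_identity_general (L a : ℕ) (π : List ℕ)
    (ha : 1 ≤ a) (hsum : (a + 1) + π.sum = L) :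
    g L (List.replicate (a + 1) 1 ++ π) + g L (List.replicate (a - 1) 1 ++ 2 :: π)
      = (L.choose a : ℤ) * g (L - a) (1 :: π) := by
  obtain ⟨k, rfl⟩ : ∃ k, a = k + 1 := ⟨a - 1, by omega⟩
  obtain ⟨b, rfl⟩ : ∃ b, L = k + 1 + b := ⟨L - (k + 1), by omega⟩
  have hcut := g_append_cons_cons (u := List.replicate k 1) (x := 1) (y := 1) (v := π)
    (a := k + 1) (b := b) (by simp [add_comm]) (by simp at hsum ⊢; omega)
  have hones : List.replicate (k + 1 + 1) 1 ++ π = List.replicate k 1 ++ 1 :: 1 :: π := by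
    simp [List.replicate_succ']
  rw [← List.replicate_succ', g_replicate_one] at hcut
  rw [hones, hcut, Nat.add_sub_cancel, Nat.add_sub_cancel_left]
  ring

/-- `g(1^{a+1},π) + g(1^{a-1},2,π) = C(L,a) · g'(1,π)` where `g'` is the analogous
signed coarsening sum for compositions of `L − a`. -/
theorem g_pair_identity (L a : ℕ) (π : List ℕ)
    (ha : 1 ≤ a) (hπ : ∀ x ∈ π, 1 ≤ x) (hsum : (a + 1) + π.sum = L) :
    g L (List.replicate (a + 1) 1 ++ π) + g L (List.replicate (a - 1) 1 ++ 2 :: π)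
      = (L.choose a : ℤ) * g (L - a) (1 :: π) :=
  g_pair_identity_general L a π ha hsum
end

section
/- Intertwining property of the species-merging map: let s ⊆ t be subsets of {1,…,L−1} labeling sectors, and let φ_{s,t} be the linear map from V_t to V_s which relabels local states by the monotone merging map determined by s ⊆ t. Then φ_{s,t} ∘ H_t = H_s ∘ φ_{s,t}, where H_s, H_t are the restrictions of the multi-species ASEP Hamiltonian to the respective sectors. -/
/-- The hopping rate `Θ(x) = p` for `x > 0`, `0` for `x = 0`, `q` for `x < 0`. -/
noncomputable def theta (p q : ℝ) (x : ℤ) : ℝ := if 0 < x then p else if x < 0 then q else 0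

/-- Cyclic successor on `Fin L`. -/
def cycSucc {L : ℕ} (i : Fin L) : Fin L := ⟨((i : ℕ) + 1) % L, Nat.mod_lt _ i.pos⟩

/-- The configuration obtained from `k` by interchanging the local states at
sites `i` and `i+1` (cyclically). -/
def swapAt {L N : ℕ} (k : Fin L → Fin N) (i : Fin L) : Fin L → Fin N :=
  fun j => if j = i then k (cycSucc i) else if j = cycSucc i then k i else k j

/-- The species of the `u`-th letter (`1 ≤ u ≤ L`) of the nondecreasing word
`1^{s₁} 2^{s₂−s₁} ⋯ n^{L−s_{n−1}}` determined by the sector `s = {s₁<…<s_{n−1}}`. -/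
def spc (s : Finset ℕ) (u : ℕ) : ℕ := 1 + (s.filter (· < u)).card

/-- A configuration lies in the sector labeled by `s ⊆ {1,…,L−1}` iff it is a
permutation of the word `1^{s₁} 2^{s₂−s₁} ⋯ n^{L−s_{n−1}}`. -/
def inSector (L : ℕ) (s : Finset ℕ) (k : Fin L → Fin (L + 1)) : Prop :=
  Multiset.map (fun j => (k j : ℕ)) Finset.univ.val
    = Multiset.map (spc s) (Finset.Icc 1 L).val

instance (L : ℕ) (s : Finset ℕ) : DecidablePred (inSector L s) :=
  fun _ => inferInstanceAs (Decidable (_ = _))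

/-- The set of basis configurations of the sector `V_s`. -/
abbrev Sector (L : ℕ) (s : Finset ℕ) := {k : Fin L → Fin (L + 1) // inSector L s k}

/-- The monotone merging map on species labels determined by `s ⊆ t`: if
`s = t \ {t_{i₁},…,t_{i_l}}` then `x ↦ x − #{j : i_j < x}`. -/
def mrg (s t : Finset ℕ) (x : ℕ) : ℕ :=
  x - ((t \ s).filter (fun e => (t.filter (· ≤ e)).card < x)).card

/-- The species-merging map `φ_{s,t} : V_t → V_s` as a matrix. -/
noncomputable def PhiMat (L : ℕ) (s t : Finset ℕ) : Matrix (Sector L s) (Sector L t) ℝ :=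
  fun c k => if (fun j => (c.1 j : ℕ)) = (fun j => mrg s t (k.1 j)) then 1 else 0

/-- The multi-species ASEP Hamiltonian restricted to the sector `V_s`:
`H|k⟩ = ∑_i Θ(k_i−k_{i+1}) (|k^{(i)}⟩ − |k⟩)` cyclically. -/
noncomputable def HSec (p q : ℝ) (L : ℕ) (s : Finset ℕ) :
    Matrix (Sector L s) (Sector L s) ℝ :=
  fun c k => ∑ i : Fin L, theta p q ((k.1 i : ℤ) - (k.1 (cycSucc i) : ℤ)) *
    ((if c.1 = swapAt k.1 i then 1 else 0) - (if c.1 = k.1 then 1 else 0))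

/-! Merging species is monotone and maps the sector word of `t` onto that of `s`, so it sends
sector configurations to sector configurations and commutes with exchanging two sites. A hop
`k_i ≷ k_{i+1}` therefore keeps its rate `p` or `q` after merging, unless the two species get
identified; then the rate drops to `0`, but the exchange it would have caused is trivial anyway. -/

open Finset

lemma card_filter_le_lt_card_filter_le (t : Finset ℕ) {a b : ℕ} (hb : b ∈ t) (hab : a < b) :
    #(t.filter (· ≤ a)) < #(t.filter (· ≤ b)) :=
  card_lt_card <| (ssubset_iff_of_subset (monotone_filter_right _ fun _ _ hx => hx.trans hab.le)).2
    ⟨b, mem_filter.2 ⟨hb, le_rfl⟩, fun h => (mem_filter.1 h).2.not_gt hab⟩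

lemma injOn_card_filter_le (t : Finset ℕ) : Set.InjOn (fun e => #(t.filter (· ≤ e))) t := by
  intro a ha b hb hab
  by_contra hne
  rcases Nat.lt_or_gt_of_ne hne with h | h
  · exact (card_filter_le_lt_card_filter_le t hb h).ne hab
  · exact (card_filter_le_lt_card_filter_le t ha h).ne' hab

lemma card_filter_le_le_card_filter_lt_iff {t : Finset ℕ} {e : ℕ} (he : e ∈ t) (u : ℕ) :
    #(t.filter (· ≤ e)) ≤ #(t.filter (· < u)) ↔ e < u := by
  refine ⟨fun h => ?_, fun h => card_le_card <| monotone_filter_right _ fun _ _ hx => hx.trans_lt h⟩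
  by_contra! hue
  refine h.not_gt (card_lt_card <| (ssubset_iff_of_subset ?_).2 ⟨e, ?_, ?_⟩)
  · exact monotone_filter_right _ fun _ _ hx => (hx.trans_le hue).le
  · exact mem_filter.2 ⟨he, le_rfl⟩
  · exact fun h' => (mem_filter.1 h').2.not_ge hue

lemma mrg_monotone (s t : Finset ℕ) : Monotone (mrg s t) := by
  intro x y hxy
  set rank := fun e => #(t.filter (· ≤ e))
  set D := fun z => (t \ s).filter (fun e => rank e < z)
  have hsub : D x ⊆ D y := monotone_filter_right _ fun _ _ he => he.trans_le hxy
  have hnew : #(D y \ D x) ≤ y - x := by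
    have hDt : D y \ D x ⊆ t := sdiff_subset.trans <| (filter_subset _ _).trans sdiff_subset
    have := card_le_card_of_injOn rank (t := Ico x y) ?_ ((injOn_card_filter_le t).mono hDt)
    · simpa using this
    · intro e he
      simp only [coe_sdiff, Set.mem_sdiff, mem_coe, D, mem_filter] at he
      simp only [coe_Ico, Set.mem_Ico]
      exact ⟨not_lt.1 fun h => he.2 ⟨he.1.1, h⟩, he.1.2⟩
  have := card_sdiff_add_card_eq_card hsub
  change x - #(D x) ≤ y - #(D y)
  omega

lemma mrg_spc {s t : Finset ℕ} (hst : s ⊆ t) (u : ℕ) : mrg s t (spc t u) = spc s u := by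
  have hmerged : (t \ s).filter (fun e => #(t.filter (· ≤ e)) < spc t u) = (t \ s).filter (· < u) :=
    filter_congr fun e he => by
      rw [spc, Nat.lt_one_add_iff, card_filter_le_le_card_filter_lt_iff (sdiff_subset he)]
  have hsplit : #(s.filter (· < u)) + #((t \ s).filter (· < u)) = #(t.filter (· < u)) := by
    rw [← card_union_of_disjoint (disjoint_filter_filter disjoint_sdiff), ← filter_union,
      union_sdiff_of_subset hst]
  rw [mrg, hmerged, spc, spc]
  omega

def mrgFin {n : ℕ} (s t : Finset ℕ) (x : Fin n) : Fin n :=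
  ⟨mrg s t x, (Nat.sub_le _ _).trans_lt x.isLt⟩

lemma inSector.comp_mrgFin {L : ℕ} {s t : Finset ℕ} (hst : s ⊆ t) {k : Fin L → Fin (L + 1)}
    (hk : inSector L t k) : inSector L s (mrgFin s t ∘ k) := by
  unfold inSector at hk ⊢
  calc Multiset.map (fun j => mrg s t (k j)) univ.val
      = Multiset.map (mrg s t) (Multiset.map (fun j => (k j : ℕ)) univ.val) := by
        rw [Multiset.map_map]; rfl
    _ = Multiset.map (fun u => mrg s t (spc t u)) (Icc 1 L).val := by rw [hk, Multiset.map_map]; rfl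
    _ = Multiset.map (spc s) (Icc 1 L).val := by simp only [mrg_spc hst]

lemma inSector.comp_perm {L : ℕ} {s : Finset ℕ} {k : Fin L → Fin (L + 1)} (hk : inSector L s k)
    (σ : Equiv.Perm (Fin L)) : inSector L s (k ∘ σ) := by
  unfold inSector at hk ⊢
  rw [← hk]
  conv_rhs => rw [← Multiset.map_univ_val_equiv σ, Multiset.map_map]
  rfl

lemma swapAt_eq_comp_swap {L N : ℕ} (k : Fin L → Fin N) (i : Fin L) :
    swapAt k i = k ∘ Equiv.swap i (cycSucc i) := by
  funext j
  simp only [swapAt, Function.comp_apply, Equiv.swap_apply_def]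
  split_ifs <;> rfl

lemma swapAt_comp {L M N : ℕ} (g : Fin M → Fin N) (k : Fin L → Fin M) (i : Fin L) :
    swapAt (g ∘ k) i = g ∘ swapAt k i := by
  simp only [swapAt_eq_comp_swap, Function.comp_assoc]

lemma swapAt_eq_self {L N : ℕ} {k : Fin L → Fin N} {i : Fin L} (h : k i = k (cycSucc i)) :
    swapAt k i = k := by
  funext j
  simp only [swapAt]
  split_ifs with h1 h2
  · rw [h1, h]
  · rw [h2, h]
  · rfl

lemma theta_sub_mul_eq_of_monotone (p q : ℝ) {g : ℕ → ℕ} (hg : Monotone g) (a b : ℕ) {X : ℝ}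
    (hX : g a = g b → X = 0) : theta p q ((a : ℤ) - b) * X = theta p q ((g a : ℤ) - g b) * X := by
  by_cases hab : g a = g b
  · simp [hX hab]
  congr 1
  unfold theta
  have hne : a ≠ b := fun h => hab (h ▸ rfl)
  rcases hne.lt_or_gt with h | h <;> have := hg h.le <;> split_ifs <;> first | rfl | omega

namespace Sector

variable {L : ℕ} {s t : Finset ℕ}

def merge (hst : s ⊆ t) (k : Sector L t) : Sector L s :=
  ⟨mrgFin s t ∘ k.1, k.2.comp_mrgFin hst⟩

def swap (k : Sector L s) (i : Fin L) : Sector L s :=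
  ⟨swapAt k.1 i, swapAt_eq_comp_swap k.1 i ▸ k.2.comp_perm _⟩

lemma merge_swap (hst : s ⊆ t) (k : Sector L t) (i : Fin L) :
    merge hst (k.swap i) = (merge hst k).swap i :=
  Subtype.ext (swapAt_comp (mrgFin s t) k.1 i).symm

lemma swap_eq_self {k : Sector L s} {i : Fin L} (h : k.1 i = k.1 (cycSucc i)) : k.swap i = k :=
  Subtype.ext (swapAt_eq_self h)

end Sector

lemma PhiMat_apply {L : ℕ} {s t : Finset ℕ} (hst : s ⊆ t) (c : Sector L s) (k : Sector L t) :
    PhiMat L s t c k = if c = Sector.merge hst k then 1 else 0 := by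
  simp only [PhiMat, Subtype.ext_iff, funext_iff, Fin.ext_iff, Sector.merge]
  rfl

lemma HSec_apply (p q : ℝ) {L : ℕ} {s : Finset ℕ} (c k : Sector L s) :
    HSec p q L s c k = ∑ i, theta p q ((k.1 i : ℤ) - (k.1 (cycSucc i) : ℤ)) *
      ((if c = k.swap i then 1 else 0) - (if c = k then 1 else 0)) := by
  simp only [HSec, Subtype.ext_iff]
  rfl

lemma sum_boole_mul_boole_sub_boole {ι κ R : Type*} [Fintype ι] [DecidableEq ι] [DecidableEq κ]
    [Ring R] (f : ι → κ) (c : κ) (a b : ι) :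
    ∑ x, (if c = f x then 1 else 0 : R) * ((if x = a then 1 else 0) - (if x = b then 1 else 0)) =
      (if c = f a then 1 else 0) - (if c = f b then 1 else 0) := by
  simp [mul_sub, sum_sub_distrib]

theorem merging_intertwines_Hamiltonian_general (p q : ℝ) (L : ℕ) (s t : Finset ℕ)
    (hst : s ⊆ t) :
    PhiMat L s t * HSec p q L t = HSec p q L s * PhiMat L s t := by
  ext c k
  have hΦH : (PhiMat L s t * HSec p q L t) c k =
      ∑ i, theta p q ((k.1 i : ℤ) - (k.1 (cycSucc i) : ℤ)) *
        ((if c = Sector.merge hst (k.swap i) then 1 else 0) -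
          (if c = Sector.merge hst k then 1 else 0)) := by
    simp only [Matrix.mul_apply, PhiMat_apply hst, HSec_apply, mul_sum]
    rw [sum_comm]
    simp only [mul_left_comm _ (theta _ _ _), ← mul_sum, sum_boole_mul_boole_sub_boole]
  have hHΦ : (HSec p q L s * PhiMat L s t) c k = HSec p q L s c (Sector.merge hst k) := by
    simp [Matrix.mul_apply, PhiMat_apply hst]
  rw [hΦH, hHΦ, HSec_apply]
  refine sum_congr rfl fun i _ => ?_
  rw [Sector.merge_swap]
  exact theta_sub_mul_eq_of_monotone p q (mrg_monotone s t) _ _ fun h => by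
    rw [Sector.swap_eq_self (Fin.ext h), sub_self]

/-- Intertwining property of the species-merging map:
`φ_{s,t} ∘ H_t = H_s ∘ φ_{s,t}` for sectors `s ⊆ t ⊆ {1,…,L−1}`. -/
theorem merging_intertwines_Hamiltonian (p q : ℝ) (L : ℕ) (s t : Finset ℕ)
    (hst : s ⊆ t) (ht : t ⊆ Finset.Ioo 0 L) :
    PhiMat L s t * HSec p q L t = HSec p q L s * PhiMat L s t :=
  merging_intertwines_Hamiltonian_general p q L s t hst
end

section
/- Factorization and path-independence of merging maps: for sectors s ⊂ t ⊆ {1,…,L−1} with |t| = |s| + l, and any chain s = s₀ ⊂ s₁ ⊂ … ⊂ s_l = t with |s_{j+1}| = |s_j| + 1, one has φ_{s,t} = φ_{s,s₁} ∘ φ_{s₁,s₂} ∘ … ∘ φ_{s_{l−1},t}. In particular the composite is independent of the choice of intermediate sectors. -/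
/-!
Write `rank u e = #{y ∈ u | y ≤ e}`, so that `rank u` numbers the elements of `u` as `1, …, #u`
in increasing order and `mrg s t x = x - #{e ∈ t \ s | rank t e < x}`. For `s ⊆ t ⊆ u` the elements
of `u` of rank `< x` that lie in `t` are exactly the elements of `t` whose `t`-rank is below
`mrg t u x`. Counting the deleted labels of `u \ s = (u \ t) ∪ (t \ s)` in two batches then gives
`mrg s u = mrg s t ∘ mrg t u`, and the factorization along a chain follows by induction on its length.
-/

open Finset

namespace Merging

section Rank

variable {α : Type*} [LinearOrder α] (u : Finset α)

def rank (e : α) : ℕ := #{y ∈ u | y ≤ e}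

variable {u}

lemma rank_mono : Monotone (rank u) := fun _ _ hab =>
  card_le_card (monotone_filter_right u fun _ _ hy => hy.trans hab)

lemma rank_le_card (e : α) : rank u e ≤ #u := card_le_card (filter_subset _ _)

lemma rank_strictMonoOn : StrictMonoOn (rank u) u := fun _ _ b hb hab =>
  card_lt_card <| (ssubset_iff_of_subset (monotone_filter_right u fun _ _ hy => hy.trans hab.le)).2
    ⟨b, mem_filter.2 ⟨hb, le_rfl⟩, fun hb' => (mem_filter.1 hb').2.not_gt hab⟩

lemma image_rank : u.image (rank u) = Icc 1 #u := by
  refine eq_of_subset_of_card_le (fun r hr => ?_) ?_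
  · obtain ⟨e, he, rfl⟩ := mem_image.1 hr
    exact mem_Icc.2 ⟨card_pos.2 ⟨e, mem_filter.2 ⟨he, le_rfl⟩⟩, rank_le_card e⟩
  · rw [card_image_of_injOn rank_strictMonoOn.injOn, Nat.card_Icc, Nat.add_sub_cancel]

lemma card_filter_rank_lt (x : ℕ) : #{y ∈ u | rank u y < x} = min (x - 1) #u := by
  rw [← card_image_of_injOn (rank_strictMonoOn.injOn.mono (filter_subset _ u)),
    ← filter_image (p := (· < x)), image_rank,
    show {r ∈ Icc 1 #u | r < x} = Ico 1 (min x (#u + 1)) by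
      ext; simp only [mem_filter, mem_Icc, mem_Ico]; omega,
    Nat.card_Ico]
  omega

end Rank

lemma card_filter_sdiff_eq_add {α : Type*} [DecidableEq α] {s t u : Finset α} (hst : s ⊆ t)
    (htu : t ⊆ u) (p : α → Prop) [DecidablePred p] :
    #{e ∈ u \ s | p e} = #{e ∈ u \ t | p e} + #{e ∈ t \ s | p e} := by
  rw [← sdiff_union_sdiff_cancel htu hst, filter_union, card_union_of_disjoint
    (disjoint_filter_filter (disjoint_of_subset_right sdiff_subset disjoint_sdiff_self_left))]

lemma mrg_eq (s t : Finset ℕ) (x : ℕ) : mrg s t x = x - #{e ∈ t \ s | rank t e < x} := rfl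

lemma rank_lt_iff_lt_mrg {t u : Finset ℕ} (htu : t ⊆ u) {e : ℕ} (he : e ∈ t) (x : ℕ) :
    rank u e < x ↔ rank t e < mrg t u x := by
  set D := {y ∈ t | rank u y < x}
  have hsplit : #D + #{y ∈ u \ t | rank u y < x} = min (x - 1) #u := by
    have := card_filter_sdiff_eq_add (empty_subset t) htu (rank u · < x)
    rw [sdiff_empty, sdiff_empty] at this
    rw [← card_filter_rank_lt, this, add_comm]
  rw [mrg_eq]
  by_cases h : rank u e < x
  · have : rank t e ≤ #D :=
      card_le_card (monotone_filter_right t fun _ _ hy => (rank_mono hy).trans_lt h)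
    omega
  · have hins : insert e D ⊆ {y ∈ t | y ≤ e} := insert_subset (mem_filter.2 ⟨he, le_rfl⟩)
      fun y hy => mem_filter.2 ⟨(mem_filter.1 hy).1,
        (rank_mono.reflect_lt ((mem_filter.1 hy).2.trans_le (not_lt.1 h))).le⟩
    have hcard := card_le_card hins
    rw [card_insert_of_notMem (show e ∉ D from fun he' => h (mem_filter.1 he').2)] at hcard
    have := rank_le_card (u := u) e
    change _ ≤ rank t e at hcard
    omega

lemma mrg_mrg {s t u : Finset ℕ} (hst : s ⊆ t) (htu : t ⊆ u) (x : ℕ) :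
    mrg s t (mrg t u x) = mrg s u x := by
  have hcongr : {e ∈ t \ s | rank t e < mrg t u x} = {e ∈ t \ s | rank u e < x} :=
    filter_congr fun e he => (rank_lt_iff_lt_mrg htu (mem_sdiff.1 he).1 x).symm
  rw [mrg_eq s t, hcongr, mrg_eq t u, mrg_eq s u, card_filter_sdiff_eq_add hst htu, Nat.sub_sub]

end Merging

theorem merging_factorization_path_independent_general (l : ℕ) (c : ℕ → Finset ℕ)
    (hchain : ∀ j < l, c j ⊆ c (j + 1))
    (x : ℕ) :
    mrg (c 0) (c l) x
      = (List.range l).foldr (fun j y => mrg (c j) (c (j + 1)) y) x := by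
  have hmono : MonotoneOn c (Set.Iic l) := monotoneOn_of_le_succ Set.ordConnected_Iic
    fun j _ _ hj => by
      rw [Order.succ_eq_add_one] at hj ⊢
      exact hchain j (Set.mem_Iic.1 hj)
  induction l generalizing x with
  | zero => simp [Merging.mrg_eq]
  | succ n ih =>
    rw [List.range_succ, List.foldr_append, List.foldr_cons, List.foldr_nil,
      ← ih (fun j hj => hchain j (by omega)) _ (hmono.mono (Set.Iic_subset_Iic.2 n.le_succ)),
      Merging.mrg_mrg (hmono (by simp) (by simp) n.zero_le) (hchain n n.lt_succ_self)]

/-- Factorization and path-independence of merging maps: for any saturated chain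
`s = c 0 ⊂ c 1 ⊂ … ⊂ c l = t` of sectors (each step adding one element), the
merging map `φ_{s,t}` equals the composite `φ_{c 0,c 1} ∘ … ∘ φ_{c (l−1),c l}`
of the one-step merging maps, on all species labels `1 ≤ x ≤ |t| + 1`. -/
theorem merging_factorization_path_independent (L l : ℕ) (c : ℕ → Finset ℕ)
    (hIoo : ∀ j ≤ l, c j ⊆ Finset.Ioo 0 L)
    (hchain : ∀ j < l, c j ⊆ c (j + 1))
    (hcard : ∀ j < l, (c (j + 1)).card = (c j).card + 1)
    (x : ℕ) (hx1 : 1 ≤ x) (hx2 : x ≤ (c l).card + 1) :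
    mrg (c 0) (c l) x
      = (List.range l).foldr (fun j y => mrg (c j) (c (j + 1)) y) x :=
  merging_factorization_path_independent_general l c hchain x
end

section
/- Spectrum reversal in the maximal sector: let H act on the free vector space over the set of permutations (k₁,…,k_L) of (1,…,L) by (H f)(k) = ∑_{i∈ℤ_L} Θ(k_i − k_{i+1})(f(k^{(i)}) − f(k)), where k^{(i)} swaps k_i and k_{i+1} cyclically and Θ(x)=p for x>0, q for x<0. If f satisfies (H^T f)(k) = E f(k) for all k (i.e. f is a left eigenvector with eigenvalue E), then the function ψ(k₁,…,k_L) := sgn(k₁,…,k_L) · f(k_L,…,k₁) is a right eigenvector of H with eigenvalue −L(p+q) − E. -/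
/-- The configuration (in the maximal sector of permutations of `(1,…,L)`)
obtained from `k` by interchanging the local states at sites `i` and `i+1`. -/
def swapK {L : ℕ} (k : Equiv.Perm (Fin L)) (i : Fin L) : Equiv.Perm (Fin L) :=
  (Equiv.swap i (cycSucc i)).trans k

/-- The multi-species ASEP Hamiltonian on the maximal sector, as a matrix:
`H|k⟩ = ∑_{i∈ℤ_L} Θ(k_i−k_{i+1}) (|k^{(i)}⟩ − |k⟩)`. -/
noncomputable def HmatMax (p q : ℝ) (L : ℕ) :
    Matrix (Equiv.Perm (Fin L)) (Equiv.Perm (Fin L)) ℝ :=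
  fun c k => ∑ i : Fin L, theta p q ((k i : ℤ) - (k (cycSucc i) : ℤ)) *
    ((if c = swapK k i then 1 else 0) - (if c = k then 1 else 0))

lemma theta_add_theta_neg (p q : ℝ) {x : ℤ} (hx : x ≠ 0) :
    theta p q x + theta p q (-x) = p + q := by
  unfold theta
  split_ifs <;> first | ring1 | omega

lemma cycSucc_ne {L : ℕ} (hL : 2 ≤ L) (i : Fin L) : cycSucc i ≠ i := by
  simp only [cycSucc, Ne, Fin.ext_iff]
  rcases Nat.lt_or_ge (i + 1) L with h | h
  · rw [Nat.mod_eq_of_lt h]; omega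
  · rw [show (i : ℕ) + 1 = L by omega, Nat.mod_self]; omega

lemma theta_add_theta_swap (p q : ℝ) {L : ℕ} (hL : 2 ≤ L) (k : Equiv.Perm (Fin L)) (i : Fin L) :
    theta p q ((k i : ℤ) - k (cycSucc i)) + theta p q ((k (cycSucc i) : ℤ) - k i) = p + q := by
  have hne : ((k i : ℤ) - k (cycSucc i)) ≠ 0 := by
    rw [sub_ne_zero, Ne, Nat.cast_inj, ← Fin.ext_iff, k.injective.eq_iff]
    exact (cycSucc_ne hL i).symm
  simpa only [neg_sub] using theta_add_theta_neg p q hne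

def bondRev {L : ℕ} (i : Fin L) : Fin L := Fin.rev (cycSucc i)

lemma cycSucc_bondRev {L : ℕ} (i : Fin L) : cycSucc (bondRev i) = Fin.rev i := by
  ext
  simp only [bondRev, cycSucc, Fin.val_rev]
  rcases Nat.lt_or_ge (i + 1) L with h | h
  · rw [Nat.mod_eq_of_lt h, show L - ((i : ℕ) + 1 + 1) + 1 = L - (i + 1) by omega,
      Nat.mod_eq_of_lt (by omega)]
  · rw [show (i : ℕ) + 1 = L by omega, Nat.mod_self, show L - (0 + 1) + 1 = L by omega,
      Nat.mod_self]
    omega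

lemma bondRev_involutive {L : ℕ} : Function.Involutive (bondRev (L := L)) := fun i => by
  rw [bondRev, cycSucc_bondRev, Fin.rev_rev]

lemma swapK_involutive {L : ℕ} (i : Fin L) : Function.Involutive (swapK · i) := fun k => by
  simp [swapK, ← Equiv.trans_assoc]

lemma sign_swapK {L : ℕ} (hL : 2 ≤ L) (k : Equiv.Perm (Fin L)) (i : Fin L) :
    Equiv.Perm.sign (swapK k i) = -Equiv.Perm.sign k := by
  rw [show swapK k i = k * Equiv.swap i (cycSucc i) from rfl, Equiv.Perm.sign_mul,
    Equiv.Perm.sign_swap (cycSucc_ne hL i).symm, mul_neg_one]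

lemma revPerm_trans_swapK_bondRev {L : ℕ} (k : Equiv.Perm (Fin L)) (i : Fin L) :
    Fin.revPerm.trans (swapK k (bondRev i)) = swapK (Fin.revPerm.trans k) i := by
  ext x
  simp only [swapK, Equiv.trans_apply, Fin.revPerm_apply]
  rw [Fin.rev_injective.map_swap, cycSucc_bondRev, bondRev, Equiv.swap_comm]

lemma sum_HmatMax_mul (p q : ℝ) {L : ℕ} (ψ : Equiv.Perm (Fin L) → ℝ) (c : Equiv.Perm (Fin L)) :
    ∑ k, HmatMax p q L c k * ψ k
      = ∑ i, (theta p q ((c (cycSucc i) : ℤ) - c i) * ψ (swapK c i)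
          - theta p q ((c i : ℤ) - c (cycSucc i)) * ψ c) := by
  simp only [HmatMax, Finset.sum_mul]
  rw [Finset.sum_comm]
  refine Finset.sum_congr rfl fun i _ => ?_
  have hcond (k : Equiv.Perm (Fin L)) : c = swapK k i ↔ swapK c i = k := by
    rw [(swapK_involutive i).eq_iff, eq_comm]
  simp only [hcond, mul_sub, sub_mul, mul_ite, ite_mul, mul_one, mul_zero, zero_mul,
    Finset.sum_sub_distrib, Finset.sum_ite_eq, Finset.mem_univ, if_true]
  simp [swapK]

lemma reversed_bond_term (p q : ℝ) {L : ℕ} (hL : 2 ≤ L) (f : Equiv.Perm (Fin L) → ℝ)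
    (c : Equiv.Perm (Fin L)) (j : Fin L) :
    theta p q ((c (cycSucc (bondRev j)) : ℤ) - c (bondRev j))
        * ((Equiv.Perm.sign (swapK c (bondRev j)) : ℤ) * f (Fin.revPerm.trans (swapK c (bondRev j))))
      - theta p q ((c (bondRev j) : ℤ) - c (cycSucc (bondRev j)))
        * ((Equiv.Perm.sign c : ℤ) * f (Fin.revPerm.trans c))
      = -(Equiv.Perm.sign c : ℤ) * (theta p q (((Fin.revPerm.trans c) j : ℤ)
            - (Fin.revPerm.trans c) (cycSucc j))
          * (f (swapK (Fin.revPerm.trans c) j) - f (Fin.revPerm.trans c))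
          + (p + q) * f (Fin.revPerm.trans c)) := by
  have hsucc : c (cycSucc (bondRev j)) = (Fin.revPerm.trans c) j := by
    simp [cycSucc_bondRev]
  have hself : c (bondRev j) = (Fin.revPerm.trans c) (cycSucc j) := rfl
  have hrates := theta_add_theta_swap p q hL (Fin.revPerm.trans c) j
  rw [hsucc, hself, sign_swapK hL, revPerm_trans_swapK_bondRev]
  push_cast
  linear_combination (-(Equiv.Perm.sign c : ℤ) * f (Fin.revPerm.trans c) : ℝ) * hrates

/-- Spectrum reversal in the maximal sector: if `f` is a left eigenvector of `H`
with eigenvalue `E`, then `ψ(k₁,…,k_L) = sgn(k) · f(k_L,…,k₁)` is a right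
eigenvector of `H` with eigenvalue `−L(p+q) − E`. -/
theorem spectrum_reversal (p q E : ℝ) (L : ℕ) (hL : 2 ≤ L)
    (f : Equiv.Perm (Fin L) → ℝ)
    (hf : ∀ k : Equiv.Perm (Fin L),
      ∑ i : Fin L, theta p q ((k i : ℤ) - (k (cycSucc i) : ℤ)) * (f (swapK k i) - f k)
        = E * f k) :
    ∀ c : Equiv.Perm (Fin L),
      ∑ k : Equiv.Perm (Fin L),
          HmatMax p q L c k * (((Equiv.Perm.sign k : ℤ) : ℝ) * f (Fin.revPerm.trans k))
        = (-(L : ℝ) * (p + q) - E)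
            * (((Equiv.Perm.sign c : ℤ) : ℝ) * f (Fin.revPerm.trans c)) := by
  intro c
  rw [sum_HmatMax_mul, ← bondRev_involutive.bijective.sum_comp]
  simp only [reversed_bond_term p q hL f c]
  rw [← Finset.mul_sum, Finset.sum_add_distrib, hf, ← Finset.sum_mul, Finset.sum_const,
    Finset.card_univ, Fintype.card_fin, nsmul_eq_mul]
  ring
end
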